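/- arXiv:2605.29921 — 2 statements merged into one kernel-verified Lean document; each statement's English description precedes it below -/
import Mathlib

section
/- Let M = ⊕_{(Δ,k)} M_Δ^{(k)} be a bigraded vector space with finite-dimensional graded pieces, Δ-grading bounded below. Let a, b be operators on M with a : M_Δ^{(k)} → M_{Δ+n}^{(k+c)} and b : M_Δ^{(k)} → M_{Δ-n}^{(k-c)} for fixed integers n > 0 and c. Then, as formal power series in q with coefficients Laurent in y, tr_M(a b y^{h₀} q^{L₀}) = -(y^c q^n/(1 - y^c q^n)) · tr_M([a,b] y^{h₀} q^{L₀}), where y^{h₀} q^{L₀} acts on M_Δ^{(k)} by y^k q^Δ and the fraction denotes its geometric series expansion. -/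
section Aux

variable {M : Type*} [AddCommGroup M] [Module ℂ M]

lemma aux_trace_bot (p : Submodule ℂ M) (hp : p = ⊥) (f : Module.End ℂ M)
    (hf : ∀ x ∈ p, f x ∈ p) :
    LinearMap.trace ℂ p (f.restrict hf) = 0 := by
  haveI : Subsingleton p := by rw [hp]; infer_instance
  rw [Subsingleton.elim (f.restrict hf) 0, map_zero]

lemma aux_trace_sub (p : Submodule ℂ M) [FiniteDimensional ℂ p]
    (f g : Module.End ℂ M) (hf : ∀ x ∈ p, f x ∈ p) (hg : ∀ x ∈ p, g x ∈ p)
    (hfg : ∀ x ∈ p, (f - g) x ∈ p) :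
    LinearMap.trace ℂ p ((f - g).restrict hfg) =
      LinearMap.trace ℂ p (f.restrict hf) - LinearMap.trace ℂ p (g.restrict hg) := by
  have : (f - g).restrict hfg = f.restrict hf - g.restrict hg := by
    ext x
    simp [LinearMap.restrict_apply]
  rw [this, map_sub]

lemma aux_cyc (p q : Submodule ℂ M) [FiniteDimensional ℂ p] [FiniteDimensional ℂ q]
    (a b : Module.End ℂ M)
    (hab : ∀ x ∈ p, (a * b) x ∈ p) (hba : ∀ x ∈ q, (b * a) x ∈ q)
    (hbpq : ∀ x ∈ p, b x ∈ q) (haqp : ∀ x ∈ q, a x ∈ p) :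
    LinearMap.trace ℂ p ((a * b).restrict hab) =
      LinearMap.trace ℂ q ((b * a).restrict hba) := by
  have h1 : (a * b).restrict hab = (a.restrict haqp) ∘ₗ (b.restrict hbpq) := by
    ext x
    simp [LinearMap.restrict_apply, Module.End.mul_apply]
  have h2 : (b * a).restrict hba = (b.restrict hbpq) ∘ₗ (a.restrict haqp) := by
    ext x
    simp [LinearMap.restrict_apply, Module.End.mul_apply]
  rw [h1, h2, LinearMap.trace_comp_comm']

end Aux

/-- Bigraded trace identity: for `M = ⊕ M_Δ^{(k)}` with finite-dimensional pieces and
`Δ`-grading bounded below, and operators `a`, `b` shifting the bigrading by `(n,c)` and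
`(-n,-c)` with `n > 0`, the coefficient of `y^k q^Δ` in
`tr_M(a b y^{h₀} q^{L₀}) = -(y^c q^n/(1-y^c q^n))·tr_M([a,b] y^{h₀} q^{L₀})`, namely:
`tr_{M_Δ^{(k)}}(ab) = -∑_{m≥1} tr_{M_{Δ-mn}^{(k-mc)}}([a,b])`. -/
theorem stmt3 {M : Type*} [AddCommGroup M] [Module ℂ M]
    (D : ℤ → ℤ → Submodule ℂ M) [∀ Δ k, FiniteDimensional ℂ (D Δ k)]
    (Δ₀ : ℤ) (hbd : ∀ Δ k : ℤ, Δ < Δ₀ → D Δ k = ⊥)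
    (n c : ℤ) (hn : 0 < n)
    (a b : Module.End ℂ M)
    (ha : ∀ Δ k : ℤ, ∀ x ∈ D Δ k, a x ∈ D (Δ + n) (k + c))
    (hb : ∀ Δ k : ℤ, ∀ x ∈ D Δ k, b x ∈ D (Δ - n) (k - c))
    (hab : ∀ Δ k : ℤ, ∀ x ∈ D Δ k, (a * b) x ∈ D Δ k)
    (hcm : ∀ Δ k : ℤ, ∀ x ∈ D Δ k, (a * b - b * a) x ∈ D Δ k)
    (Δ k : ℤ) :
    LinearMap.trace ℂ (D Δ k) ((a * b).restrict (hab Δ k)) =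
      - ∑' m : ℕ,
        LinearMap.trace ℂ (D (Δ - ((m : ℤ) + 1) * n) (k - ((m : ℤ) + 1) * c))
          ((a * b - b * a).restrict
            (hcm (Δ - ((m : ℤ) + 1) * n) (k - ((m : ℤ) + 1) * c))) := by
  set T : ℤ → ℤ → ℂ := fun Δ' k' =>
    LinearMap.trace ℂ (D Δ' k') ((a * b).restrict (hab Δ' k')) with hT
  set C : ℤ → ℤ → ℂ := fun Δ' k' =>
    LinearMap.trace ℂ (D Δ' k') ((a * b - b * a).restrict (hcm Δ' k')) with hC
  -- the basic step
  have key : ∀ Δ' k' : ℤ, T Δ' k' = T (Δ' - n) (k' - c) - C (Δ' - n) (k' - c) := by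
    intro Δ' k'
    have hba : ∀ x ∈ D (Δ' - n) (k' - c), (b * a) x ∈ D (Δ' - n) (k' - c) := by
      intro x hx
      have h1 := hab (Δ' - n) (k' - c) x hx
      have h2 := hcm (Δ' - n) (k' - c) x hx
      have : (b * a) x = (a * b) x - (a * b - b * a) x := by simp
      rw [this]
      exact sub_mem h1 h2
    have haqp : ∀ x ∈ D (Δ' - n) (k' - c), a x ∈ D Δ' k' := by
      intro x hx
      have := ha (Δ' - n) (k' - c) x hx
      simpa using this
    have hcyc := aux_cyc (D Δ' k') (D (Δ' - n) (k' - c)) a b (hab Δ' k') hba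
      (hb Δ' k') haqp
    have hsub := aux_trace_sub (D (Δ' - n) (k' - c)) (a * b) (b * a)
      (hab (Δ' - n) (k' - c)) hba (hcm (Δ' - n) (k' - c))
    show T Δ' k' = T (Δ' - n) (k' - c) - C (Δ' - n) (k' - c)
    rw [hT, hC]
    simp only [hcyc, hsub]
    ring
  -- telescoping
  have tel : ∀ N : ℕ, T Δ k = T (Δ - N * n) (k - N * c) -
      ∑ m ∈ Finset.range N, C (Δ - ((m : ℤ) + 1) * n) (k - ((m : ℤ) + 1) * c) := by
    intro N
    induction N with
    | zero => simp
    | succ N ih =>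
      rw [ih, key (Δ - N * n) (k - N * c), Finset.sum_range_succ]
      have e1 : Δ - (N : ℤ) * n - n = Δ - ((N : ℤ) + 1) * n := by ring
      have e2 : (k : ℤ) - (N : ℤ) * c - c = k - ((N : ℤ) + 1) * c := by ring
      have e3 : Δ - ((N + 1 : ℕ) : ℤ) * n = Δ - ((N : ℤ) + 1) * n := by push_cast; ring
      have e4 : (k : ℤ) - ((N + 1 : ℕ) : ℤ) * c = k - ((N : ℤ) + 1) * c := by push_cast; ring
      rw [e1, e2, e3, e4]
      ring
  -- choose N large
  set N : ℕ := (Δ - Δ₀).toNat + 1 with hN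
  have hsmall : ∀ m : ℕ, N ≤ m → Δ - ((m : ℤ)) * n < Δ₀ := by
    intro m hm
    have h1 : (Δ - Δ₀) < (N : ℤ) := by
      rw [hN]
      push_cast
      exact lt_of_le_of_lt (Int.self_le_toNat _) (by linarith)
    have h2 : (N : ℤ) ≤ m := by exact_mod_cast hm
    have h3 : (m : ℤ) ≤ (m : ℤ) * n := by
      nlinarith [Int.natCast_nonneg m]
    linarith
  have hTN : T (Δ - N * n) (k - N * c) = 0 := by
    rw [hT]
    exact aux_trace_bot _ (hbd _ _ (hsmall N le_rfl)) _ _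
  have hCz : ∀ m : ℕ, m ∉ Finset.range N →
      C (Δ - ((m : ℤ) + 1) * n) (k - ((m : ℤ) + 1) * c) = 0 := by
    intro m hm
    rw [Finset.mem_range, not_lt] at hm
    have : Δ - (((m : ℕ) + 1 : ℕ) : ℤ) * n < Δ₀ := hsmall (m + 1) (by omega)
    rw [hC]
    refine aux_trace_bot _ (hbd _ _ ?_) _ _
    push_cast at this
    exact this
  have htsum : (∑' m : ℕ, C (Δ - ((m : ℤ) + 1) * n) (k - ((m : ℤ) + 1) * c)) =
      ∑ m ∈ Finset.range N, C (Δ - ((m : ℤ) + 1) * n) (k - ((m : ℤ) + 1) * c) :=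
    tsum_eq_sum hCz
  show T Δ k = - ∑' m : ℕ, C (Δ - ((m : ℤ) + 1) * n) (k - ((m : ℤ) + 1) * c)
  rw [htsum, tel N, hTN]
  ring
end

section
/- Let M = ⊕_{k} M^{(k)} be a ℤ-graded vector space such that each M^{(k)} is finite-dimensional and M^{(k)} = 0 for k sufficiently large (grading bounded above). Let a, b be operators with a : M^{(k)} → M^{(k+c)} and b : M^{(k)} → M^{(k-c)} where c > 0. Then as formal Laurent series in y^{-1}: tr_M(a b y^{h₀}) = (1/(1-y^{-c})) tr_M([a,b] y^{h₀}), where 1/(1-y^{-c}) denotes the geometric series ∑_{m≥0} y^{-mc} and tr_M(X y^{h₀}) = ∑_k tr_{M^{(k)}}(X) y^k. -/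
/-! Moving `b` across `a` gives `tr_{M^{(j)}}(ba) = tr_{M^{(j+c)}}(ab)` (cyclicity of the trace for
maps between two different pieces), so `tr_{M^{(j)}}[a,b] = T(j) - T(j+c)` with `T(j) = tr_{M^{(j)}}(ab)`.
Summing along `j = k, k+c, k+2c, …` telescopes, and the sum is finite because `T` vanishes
above the top degree. -/

namespace LinearMap

variable {R M : Type*} [CommRing R] [AddCommGroup M] [Module R M]

theorem trace_restrict_eq_zero_of_eq_bot {p : Submodule R M} (hp : p = ⊥)
    (f : Module.End R M) (hf : ∀ x ∈ p, f x ∈ p) : trace R p (f.restrict hf) = 0 := by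
  subst hp
  rw [Subsingleton.elim (f.restrict hf) 0, map_zero]

theorem trace_restrict_mul_comm {p q : Submodule R M}
    [Module.Free R p] [Module.Finite R p] [Module.Free R q] [Module.Finite R q]
    {f g : Module.End R M} (hf : ∀ x ∈ p, f x ∈ q) (hg : ∀ x ∈ q, g x ∈ p)
    (hgf : ∀ x ∈ p, (g * f) x ∈ p) (hfg : ∀ x ∈ q, (f * g) x ∈ q) :
    trace R p ((g * f).restrict hgf) = trace R q ((f * g).restrict hfg) :=
  trace_comp_comm' (f.restrict hf) (g.restrict hg)

end LinearMap

theorem tsum_sub_succ_eq_of_forall_ge_eq_zero {G : Type*} [AddCommGroup G] [TopologicalSpace G]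
    {F : ℕ → G} {N : ℕ} (hF : ∀ m, N ≤ m → F m = 0) :
    ∑' m, (F m - F (m + 1)) = F 0 := by
  rw [tsum_eq_sum (s := Finset.range N), Finset.sum_range_sub', hF N le_rfl, sub_zero]
  intro m hm
  rw [Finset.mem_range, not_lt] at hm
  rw [hF m hm, hF (m + 1) (by omega), sub_zero]

theorem Int.exists_forall_ge_lt_add_mul (K k : ℤ) {c : ℤ} (hc : 0 < c) :
    ∃ N : ℕ, ∀ m : ℕ, N ≤ m → K < k + m * c := by
  refine ⟨(K - k).toNat + 1, fun m hm => ?_⟩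
  have hmc : (m : ℤ) ≤ m * c := le_mul_of_one_le_right (by positivity) hc
  have hK : K - k ≤ (K - k).toNat := Int.self_le_toNat _
  omega

/-- Graded trace identity: for `M = ⊕_k M^{(k)}` with finite-dimensional pieces, grading
bounded above, and operators `a`, `b` shifting the grading by `+c` and `-c` with `c > 0`,
the coefficient of `y^k` in `tr_M(a b y^{h₀}) = (1/(1-y^{-c}))·tr_M([a,b] y^{h₀})`, namely:
`tr_{M^{(k)}}(ab) = ∑_{m≥0} tr_{M^{(k+mc)}}([a,b])`. -/
theorem stmt4 {M : Type*} [AddCommGroup M] [Module ℂ M]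
    (D : ℤ → Submodule ℂ M) [∀ k, FiniteDimensional ℂ (D k)]
    (K₀ : ℤ) (hbd : ∀ k : ℤ, K₀ < k → D k = ⊥)
    (c : ℤ) (hc : 0 < c)
    (a b : Module.End ℂ M)
    (ha : ∀ k : ℤ, ∀ x ∈ D k, a x ∈ D (k + c))
    (hb : ∀ k : ℤ, ∀ x ∈ D k, b x ∈ D (k - c))
    (hab : ∀ k : ℤ, ∀ x ∈ D k, (a * b) x ∈ D k)
    (hcm : ∀ k : ℤ, ∀ x ∈ D k, (a * b - b * a) x ∈ D k)
    (k : ℤ) :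
    LinearMap.trace ℂ (D k) ((a * b).restrict (hab k)) =
      ∑' m : ℕ,
        LinearMap.trace ℂ (D (k + (m : ℤ) * c))
          ((a * b - b * a).restrict (hcm (k + (m : ℤ) * c))) := by
  set T : ℤ → ℂ := fun j => LinearMap.trace ℂ (D j) ((a * b).restrict (hab j))
  have hb' (j : ℤ) : ∀ x ∈ D (j + c), b x ∈ D j := fun x hx => by
    simpa using hb (j + c) x hx
  have hba (j : ℤ) : ∀ x ∈ D j, (b * a) x ∈ D j := fun x hx => hb' j _ (ha j x hx)
  have hcomm (j : ℤ) :
      LinearMap.trace ℂ (D j) ((a * b - b * a).restrict (hcm j)) = T j - T (j + c) := by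
    rw [← LinearMap.restrict_sub (hab j) (hba j), map_sub,
      LinearMap.trace_restrict_mul_comm (ha j) (hb' j)]
  obtain ⟨N, hN⟩ := Int.exists_forall_ge_lt_add_mul K₀ k hc
  have hvanish : ∀ m, N ≤ m → T (k + m * c) = 0 := fun m hm =>
    LinearMap.trace_restrict_eq_zero_of_eq_bot (hbd _ (hN m hm)) _ _
  calc T k = T (k + ((0 : ℕ) : ℤ) * c) := by simp
    _ = ∑' m : ℕ, (T (k + m * c) - T (k + ((m + 1 : ℕ) : ℤ) * c)) :=
      (tsum_sub_succ_eq_of_forall_ge_eq_zero hvanish).symm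
    _ = _ := tsum_congr fun m => by rw [hcomm]; push_cast; ring_nf
end
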